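/- Let Ω be a compact subset of ℝ^d equipped with a probability measure μ, and let W ⊂ C(Ω) be a class of real continuous functions such that ‖f‖_∞ ≤ M for all f ∈ W, where M > 0 is a constant. Assume that the entropy numbers of W in the uniform norm satisfy ε_n(W) ≤ n^{-r} (log(n+1))^b for all n ∈ ℕ, where r ∈ (0,1/2) and b ≥ 0. Then there is a constant C(M,r,b) > 0 such that er_m(W, L_2) ≤ C(M,r,b) m^{-r} (log(m+1))^b for all m ∈ ℕ. -/

import Mathlib

/-!
Chaining. For `k ≤ K ≈ log₂ m` take `2 ^ 2 ^ k`-element nets of `W` at the uniform scale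
`δ_k ≈ 2 ^ (-r k) k ^ b` provided by the entropy bound, and write `f ^ 2` as the square of its
coarsest approximant, plus the telescoping links `g_{k+1} ^ 2 - g_k ^ 2`, plus a remainder of size
`M δ_K ≲ m ^ (-r) (log m) ^ b`. A link is uniformly bounded by `2 M (δ_k + δ_{k+1})`, so by
Hoeffding's inequality the empirical mean over `m` random points is within
`O(M δ_k √(2 ^ k / m))` of the true mean except with probability `2 ^ (1 - 2 ^ (k + 3))`,
which beats the `2 ^ (3 · 2 ^ k)` links of level `k` in a union bound. Some sample thus controls
every link at once, and the resulting series `m ^ (-1/2) Σ_{k < K} 2 ^ ((1/2 - r) k) k ^ b` is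
dominated by its last term, `≈ m ^ (-r) (log m) ^ b`, because `r < 1/2`.
-/

open MeasureTheory Real

/-- The uniform covering property: there exist `2^n` centers belonging to `W`
whose closed `ε`-balls in the uniform norm cover `W`. -/
def UnifCovers {Ω : Type*} (W : Set (Ω → ℝ)) (n : ℕ) (ε : ℝ) : Prop :=
  ∃ g : Fin (2 ^ n) → (Ω → ℝ), (∀ j, g j ∈ W) ∧
    ∀ f ∈ W, ∃ j, ∀ x, |f x - g j x| ≤ ε

/-- Entropy numbers of `W` in the uniform norm. -/
noncomputable def entropyNum {Ω : Type*} (W : Set (Ω → ℝ)) (n : ℕ) : ℝ :=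
  sInf {ε : ℝ | 0 < ε ∧ UnifCovers W n ε}

/-- The sampling discretization error `er_m(W, L_2)` of the square norm. -/
noncomputable def erL2 {Ω : Type*} [MeasurableSpace Ω] (μ : Measure Ω)
    (W : Set (Ω → ℝ)) (m : ℕ) : ℝ :=
  ⨅ ξ : Fin m → Ω, ⨆ f : W,
    |(∫ x, (f : Ω → ℝ) x ^ 2 ∂μ) - (1 / (m : ℝ)) * ∑ j, (f : Ω → ℝ) (ξ j) ^ 2|

open ProbabilityTheory Finset
open scoped NNReal

section Discrepancy

variable {α : Type*} [MeasurableSpace α] (μ : Measure α) {m : ℕ}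

noncomputable def discrepancy (ξ : Fin m → α) (g : α → ℝ) : ℝ :=
  ∫ x, g x ∂μ - (1 / (m : ℝ)) * ∑ j, g (ξ j)

variable {μ}

lemma discrepancy_neg (ξ : Fin m → α) (g : α → ℝ) :
    discrepancy μ ξ (fun x => -g x) = -discrepancy μ ξ g := by
  simp only [discrepancy, integral_neg, sum_neg_distrib]
  ring

lemma discrepancy_sub {g h : α → ℝ} (hg : Integrable g μ) (hh : Integrable h μ)
    (ξ : Fin m → α) :
    discrepancy μ ξ (fun x => g x - h x) = discrepancy μ ξ g - discrepancy μ ξ h := by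
  simp only [discrepancy, integral_sub hg hh, sum_sub_distrib]
  ring

lemma abs_discrepancy_le [IsProbabilityMeasure μ] {g : α → ℝ} {c : ℝ} (hg : ∀ x, |g x| ≤ c)
    (ξ : Fin m → α) : |discrepancy μ ξ g| ≤ 2 * c := by
  obtain ⟨x₀⟩ : Nonempty α := nonempty_of_isProbabilityMeasure μ
  have hc : 0 ≤ c := (abs_nonneg _).trans (hg x₀)
  have hint : |∫ x, g x ∂μ| ≤ c := by
    simpa using norm_integral_le_of_norm_le_const (μ := μ)
      (ae_of_all μ fun x => (Real.norm_eq_abs (g x)).trans_le (hg x))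
  have hsum : |(1 / (m : ℝ)) * ∑ j, g (ξ j)| ≤ c := by
    rw [abs_mul, abs_of_nonneg (by positivity)]
    calc 1 / (m : ℝ) * |∑ j, g (ξ j)| ≤ 1 / (m : ℝ) * (m * c) := by
          gcongr
          simpa using abs_sum_le_sum_abs (fun j => g (ξ j)) univ |>.trans
            (sum_le_sum fun j _ => hg (ξ j))
      _ ≤ c := by
          rcases m.eq_zero_or_pos with rfl | hm
          · simpa using hc
          · rw [← mul_assoc, one_div_mul_cancel (by positivity), one_mul]
  unfold discrepancy
  linarith [abs_sub (∫ x, g x ∂μ) ((1 / (m : ℝ)) * ∑ j, g (ξ j))]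

lemma sum_sub_integral_eq_neg_mul_discrepancy (ξ : Fin m → α) (g : α → ℝ) :
    ∑ j, (g (ξ j) - ∫ x, g x ∂μ) = -(m * discrepancy μ ξ g) := by
  rcases m.eq_zero_or_pos with rfl | hm
  · simp
  · simp only [discrepancy, sum_sub_distrib, sum_const, card_univ, Fintype.card_fin, nsmul_eq_mul]
    field_simp
    ring

/-- Hoeffding's inequality. -/
lemma measureReal_le_neg_discrepancy_le [IsProbabilityMeasure μ] {q : α → ℝ}
    (hq : Measurable q) {c : ℝ} (hqc : ∀ x, |q x| ≤ c) {t : ℝ} (ht : 0 ≤ t) :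
    (Measure.pi fun _ : Fin m => μ).real {ξ | t ≤ -discrepancy μ ξ q}
      ≤ exp (-(m * t ^ 2) / (2 * c ^ 2)) := by
  set X : Fin m → (Fin m → α) → ℝ := fun j ξ => q (ξ j) - ∫ x, q x ∂μ
  have hindep : iIndepFun X (Measure.pi fun _ : Fin m => μ) :=
    iIndepFun_pi (X := fun _ x => q x - ∫ x, q x ∂μ) fun _ => (hq.sub_const _).aemeasurable
  have hsubG : ∀ j ∈ (univ : Finset (Fin m)),
      HasSubgaussianMGF (X j) ((‖c - -c‖₊ / 2) ^ 2) (Measure.pi fun _ : Fin m => μ) := by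
    intro j _
    have h : HasSubgaussianMGF (fun x => q x - ∫ x, q x ∂μ) ((‖c - -c‖₊ / 2) ^ 2)
        ((Measure.pi fun _ : Fin m => μ).map (Function.eval j)) := by
      rw [(measurePreserving_eval (fun _ : Fin m => μ) j).map_eq]
      exact hasSubgaussianMGF_of_mem_Icc hq.aemeasurable (ae_of_all μ fun x => abs_le.mp (hqc x))
    exact h.of_map (measurable_pi_apply (X := fun _ : Fin m => α) j).aemeasurable
  have hset : {ξ | t ≤ -discrepancy μ ξ q} ⊆ {ξ | m * t ≤ ∑ j, X j ξ} := by
    intro ξ hξ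
    simp only [Set.mem_ofPred_eq, X, sum_sub_integral_eq_neg_mul_discrepancy] at hξ ⊢
    nlinarith [(Nat.cast_nonneg m : (0 : ℝ) ≤ m)]
  refine (measureReal_mono hset).trans ?_
  refine (HasSubgaussianMGF.measure_sum_ge_le_of_iIndepFun hindep hsubG (by positivity)).trans_eq ?_
  have hparam : ((∑ _j : Fin m, (‖c - -c‖₊ / 2) ^ 2 : ℝ≥0) : ℝ) = m * c ^ 2 := by
    simp [sub_neg_eq_add, ← two_mul]
  rw [hparam]
  rcases m.eq_zero_or_pos with rfl | hm
  · simp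
  · congr 1
    field_simp

lemma measureReal_le_abs_discrepancy_le [IsProbabilityMeasure μ] {q : α → ℝ}
    (hq : Measurable q) {c : ℝ} (hqc : ∀ x, |q x| ≤ c) {t : ℝ} (ht : 0 ≤ t) :
    (Measure.pi fun _ : Fin m => μ).real {ξ | t ≤ |discrepancy μ ξ q|}
      ≤ 2 * exp (-(m * t ^ 2) / (2 * c ^ 2)) := by
  have hsplit : {ξ : Fin m → α | t ≤ |discrepancy μ ξ q|}
      ⊆ {ξ | t ≤ -discrepancy μ ξ q} ∪ {ξ | t ≤ -discrepancy μ ξ (fun x => -q x)} := by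
    intro ξ hξ
    rw [Set.mem_ofPred_eq, le_abs'] at hξ
    rw [Set.mem_union, Set.mem_ofPred_eq, Set.mem_ofPred_eq, discrepancy_neg, neg_neg]
    rcases hξ with h | h
    · exact Or.inl (le_neg.mpr h)
    · exact Or.inr h
  calc _ ≤ _ := measureReal_mono hsplit
    _ ≤ _ := measureReal_union_le _ _
    _ ≤ exp (-(m * t ^ 2) / (2 * c ^ 2)) + exp (-(m * t ^ 2) / (2 * c ^ 2)) := by
        gcongr
        · exact measureReal_le_neg_discrepancy_le hq hqc ht
        · exact measureReal_le_neg_discrepancy_le hq.neg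
            (fun x => (abs_neg (q x)).trans_le (hqc x)) ht
    _ = _ := by ring

lemma exists_sample_forall_abs_discrepancy_le [IsProbabilityMeasure μ] (hm : 0 < m)
    {ι : Type*} [Fintype ι] {q : ι → α → ℝ} (hq : ∀ i, Measurable (q i)) (c e : ι → ℝ)
    (he : ∀ i, 0 ≤ e i) (hsum : ∑ i, 2 * exp (-e i) < 1) :
    ∃ ξ : Fin m → α, ∀ i, (∀ x, |q i x| ≤ c i) →
      |discrepancy μ ξ (q i)| ≤ c i * √(2 * e i / m) := by
  set bad : ι → Set (Fin m → α) := fun i =>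
    {ξ | (∀ x, |q i x| ≤ c i) ∧ c i * √(2 * e i / m) < |discrepancy μ ξ (q i)|}
  have hbad : ∀ i, (Measure.pi fun _ : Fin m => μ).real (bad i) ≤ 2 * exp (-e i) := by
    intro i
    by_cases hqc : ∀ x, |q i x| ≤ c i
    · obtain ⟨x₀⟩ : Nonempty α := nonempty_of_isProbabilityMeasure μ
      rcases ((abs_nonneg _).trans (hqc x₀)).eq_or_lt with hc | hc
      · have hempty : bad i = ∅ := by
          refine Set.eq_empty_of_forall_notMem fun ξ hξ => ?_
          have hlt : c i * √(2 * e i / m) < |discrepancy μ ξ (q i)| := hξ.2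
          have hle := abs_discrepancy_le (μ := μ) hqc ξ
          rw [← hc] at hlt hle
          linarith
        simpa [hempty] using (exp_pos _).le
      · have hexp : m * (c i * √(2 * e i / m)) ^ 2 / (2 * c i ^ 2) = e i := by
          rw [mul_pow, sq_sqrt (by have := he i; positivity)]
          field_simp
        calc _ ≤ _ := measureReal_mono fun ξ hξ => le_of_lt hξ.2
          _ ≤ _ := measureReal_le_abs_discrepancy_le (hq i) hqc (by have := he i; positivity)
          _ = 2 * exp (-e i) := by rw [neg_div, hexp]
    · simpa [bad, hqc] using (exp_pos _).le
  by_contra! hcover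
  have huniv : (Set.univ : Set (Fin m → α)) ⊆ ⋃ i, bad i := fun ξ _ => by
    obtain ⟨i, hqc, hi⟩ := hcover ξ
    exact Set.mem_iUnion.mpr ⟨i, hqc, hi⟩
  have hone : 1 ≤ ∑ i, (Measure.pi fun _ : Fin m => μ).real (bad i) := by
    rw [← probReal_univ (μ := Measure.pi fun _ : Fin m => μ)]
    exact (measureReal_mono huniv).trans (measureReal_iUnion_fintype_le bad)
  have hsum_bad : ∑ i, (Measure.pi fun _ : Fin m => μ).real (bad i) ≤ ∑ i, 2 * exp (-e i) :=
    sum_le_sum fun i _ => hbad i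
  linarith

end Discrepancy

lemma abs_sq_sub_sq_le {a b M : ℝ} (ha : |a| ≤ M) (hb : |b| ≤ M) :
    |a ^ 2 - b ^ 2| ≤ 2 * M * |a - b| := by
  rw [sq_sub_sq, abs_mul]
  gcongr
  linarith [abs_add_le a b]

lemma abs_sq_sub_sq_le_of_abs_sub_le {a b y M δ δ' : ℝ} (ha : |a| ≤ M) (hb : |b| ≤ M)
    (hya : |y - a| ≤ δ) (hyb : |y - b| ≤ δ') : |a ^ 2 - b ^ 2| ≤ 2 * M * (δ + δ') := by
  have hM : 0 ≤ M := (abs_nonneg a).trans ha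
  refine (abs_sq_sub_sq_le ha hb).trans (mul_le_mul_of_nonneg_left ?_ (by positivity))
  linarith [abs_sub_le a y b, abs_sub_comm a y]

section Chaining

variable {α : Type*} [MeasurableSpace α] {μ : Measure α} [IsProbabilityMeasure μ] {m : ℕ}

lemma integrable_sq_of_abs_le {f : α → ℝ} (hf : Measurable f) {M : ℝ} (hfM : ∀ x, |f x| ≤ M) :
    Integrable (fun x => f x ^ 2) μ :=
  .of_bound (hf.pow_const 2).aestronglyMeasurable (M ^ 2) <| ae_of_all μ fun x => by
    simpa [abs_pow] using pow_le_pow_left₀ (abs_nonneg _) (hfM x) 2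

lemma abs_discrepancy_sq_le_of_chain {M δ : ℝ} {f : α → ℝ} {g : ℕ → α → ℝ}
    (hf : Measurable f) (hg : ∀ k, Measurable (g k)) (hfM : ∀ x, |f x| ≤ M)
    (hgM : ∀ k x, |g k x| ≤ M) {n : ℕ} (hfg : ∀ x, |f x - g n x| ≤ δ) (ξ : Fin m → α) :
    |discrepancy μ ξ (fun x => f x ^ 2)|
      ≤ |discrepancy μ ξ (fun x => g 0 x ^ 2)|
        + ∑ k ∈ range n, |discrepancy μ ξ (fun x => g (k + 1) x ^ 2 - g k x ^ 2)|
        + 4 * M * δ := by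
  set T : ℕ → ℝ := fun k => discrepancy μ ξ (fun x => g k x ^ 2)
  have hlink : ∀ k, discrepancy μ ξ (fun x => g (k + 1) x ^ 2 - g k x ^ 2) = T (k + 1) - T k :=
    fun k => discrepancy_sub (integrable_sq_of_abs_le (hg _) (hgM _))
      (integrable_sq_of_abs_le (hg _) (hgM _)) ξ
  have htail : |discrepancy μ ξ (fun x => f x ^ 2) - T n| ≤ 4 * M * δ := by
    rw [← discrepancy_sub (integrable_sq_of_abs_le hf hfM)
      (integrable_sq_of_abs_le (hg n) (hgM n))]
    have := abs_discrepancy_le (μ := μ)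
      (fun x => (abs_sq_sub_sq_le (hfM x) (hgM n x)).trans
        (mul_le_mul_of_nonneg_left (hfg x) (by linarith [(abs_nonneg _).trans (hfM x)]))) ξ
    linarith
  have htel : |T n - T 0| ≤ ∑ k ∈ range n, |T (k + 1) - T k| := by
    rw [← sum_range_sub T n]
    exact abs_sum_le_sum_abs _ _
  simp only [hlink]
  calc |discrepancy μ ξ (fun x => f x ^ 2)|
      = |T 0 + (T n - T 0) + (discrepancy μ ξ (fun x => f x ^ 2) - T n)| := by ring_nf
    _ ≤ |T 0| + |T n - T 0| + |discrepancy μ ξ (fun x => f x ^ 2) - T n| := abs_add_three _ _ _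
    _ ≤ _ := by gcongr

end Chaining

/-- With this exponent the union bound over the `2 ^ 2 ^ (k + 1) * 2 ^ 2 ^ k` links between
the nets of levels `k + 1` and `k` costs at most `2 ^ -(k + 2)`. -/
noncomputable def chainExponent (k : ℕ) : ℝ := 2 ^ (k + 3) * log 2

lemma chainExponent_nonneg (k : ℕ) : 0 ≤ chainExponent k := by
  unfold chainExponent
  positivity

lemma exp_neg_chainExponent (k : ℕ) : exp (-chainExponent k) = ((2 : ℝ) ^ 2 ^ (k + 3))⁻¹ := by
  rw [chainExponent, exp_neg, show (2 : ℝ) ^ (k + 3) * log 2 = ((2 ^ (k + 3) : ℕ) : ℝ) * log 2 by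
    push_cast; ring, exp_nat_mul, exp_log two_pos]

lemma card_links_mul_exp_neg_chainExponent_le (k : ℕ) :
    (2 ^ 2 ^ (k + 1) * 2 ^ 2 ^ k : ℝ) * (2 * exp (-chainExponent k)) ≤ (1 / 2) ^ (k + 2) := by
  rw [exp_neg_chainExponent, one_div_pow, ← div_eq_mul_inv, mul_div_assoc',
    div_le_div_iff₀ (by positivity) (by positivity), one_mul, ← pow_add, ← pow_succ, ← pow_add]
  have : k < 2 ^ k := Nat.lt_two_pow_self
  exact pow_le_pow_right₀ one_le_two (by rw [pow_succ, pow_succ, pow_succ]; omega)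

lemma sum_chaining_budget_lt_one (K : ℕ) :
    2 ^ 2 ^ 0 * (2 * exp (-chainExponent 0))
      + ∑ k ∈ range K, (2 ^ 2 ^ (k + 1) * 2 ^ 2 ^ k : ℝ) * (2 * exp (-chainExponent k)) < 1 := by
  have hlevel0 : 2 ^ 2 ^ 0 * (2 * exp (-chainExponent 0)) ≤ (1 / 2 : ℝ) ^ 2 :=
    le_trans (by gcongr; norm_num) (card_links_mul_exp_neg_chainExponent_le 0)
  have hlinks : ∑ k ∈ range K, (2 ^ 2 ^ (k + 1) * 2 ^ 2 ^ k : ℝ) * (2 * exp (-chainExponent k))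
      ≤ 1 / 4 * ∑ k ∈ range K, (1 / 2 : ℝ) ^ k := by
    rw [mul_sum]
    refine sum_le_sum fun k _ => (card_links_mul_exp_neg_chainExponent_le k).trans_eq ?_
    ring
  calc _ ≤ (1 / 2 : ℝ) ^ 2 + 1 / 4 * ∑ k ∈ range K, (1 / 2 : ℝ) ^ k := add_le_add hlevel0 hlinks
    _ ≤ (1 / 2 : ℝ) ^ 2 + 1 / 4 * 2 := by gcongr; exact sum_geometric_two_le K
    _ < 1 := by norm_num

/-- The terms bound the coarsest approximant, the links between consecutive levels, and the
distance to the net of level `K`. -/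
noncomputable def chainingBound (M : ℝ) (δ : ℕ → ℝ) (K m : ℕ) : ℝ :=
  M ^ 2 * √(2 * chainExponent 0 / m)
    + ∑ k ∈ range K, 2 * M * (δ (k + 1) + δ k) * √(2 * chainExponent k / m)
    + 4 * M * δ K

theorem exists_sample_abs_discrepancy_sq_le_chainingBound {α : Type*} [MeasurableSpace α]
    (μ : Measure α) [IsProbabilityMeasure μ] {W : Set (α → ℝ)}
    (hWmeas : ∀ f ∈ W, Measurable f) {M : ℝ} (hWM : ∀ f ∈ W, ∀ x, |f x| ≤ M)
    {δ : ℕ → ℝ} (hnet : ∀ k, UnifCovers W (2 ^ k) (δ k)) {m : ℕ} (hm : 0 < m) (K : ℕ) :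
    ∃ ξ : Fin m → α, ∀ f ∈ W,
      |discrepancy μ ξ (fun x => f x ^ 2)| ≤ chainingBound M δ K m := by
  choose Φ hΦW hΦcov using hnet
  let q : Fin (2 ^ 2 ^ 0) ⊕ (Σ k : Fin K, Fin (2 ^ 2 ^ (k + 1 : ℕ)) × Fin (2 ^ 2 ^ (k : ℕ))) →
      α → ℝ :=
    Sum.elim (fun i x => Φ 0 i x ^ 2) fun l x => Φ (l.1 + 1) l.2.1 x ^ 2 - Φ l.1 l.2.2 x ^ 2
  have hq : ∀ i, Measurable (q i) := by
    rintro (i | ⟨k, i, j⟩)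
    · exact (hWmeas _ (hΦW 0 i)).pow_const 2
    · exact ((hWmeas _ (hΦW _ i)).pow_const 2).sub ((hWmeas _ (hΦW _ j)).pow_const 2)
  obtain ⟨ξ, hξ⟩ := exists_sample_forall_abs_discrepancy_le (μ := μ) hm hq
    (Sum.elim (fun _ => M ^ 2) fun l => 2 * M * (δ (l.1 + 1) + δ l.1))
    (Sum.elim (fun _ => chainExponent 0) fun l => chainExponent l.1)
    (by rintro (_ | _) <;> exact chainExponent_nonneg _)
    (by
      simp only [Fintype.sum_sum_type, Sum.elim_inl, Sum.elim_inr, Fintype.sum_sigma, sum_const,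
        card_univ, Fintype.card_prod, Fintype.card_fin, nsmul_eq_mul, Nat.cast_mul, Nat.cast_pow,
        Nat.cast_ofNat, Fin.sum_univ_eq_sum_range
          (fun k => (2 ^ 2 ^ (k + 1) * 2 ^ 2 ^ k : ℝ) * (2 * exp (-chainExponent k)))]
      exact sum_chaining_budget_lt_one K)
  refine ⟨ξ, fun f hf => ?_⟩
  choose j hj using fun k => hΦcov k f hf
  have hΦM : ∀ k x, |Φ k (j k) x| ≤ M := fun k => hWM _ (hΦW k (j k))
  calc _ ≤ _ := abs_discrepancy_sq_le_of_chain (hWmeas f hf) (fun k => hWmeas _ (hΦW k (j k)))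
        (hWM f hf) hΦM (hj K) ξ
    _ ≤ chainingBound M δ K m := by
      unfold chainingBound
      gcongr with k hk
      · refine hξ (.inl (j 0)) fun x => ?_
        simpa [q, abs_pow] using pow_le_pow_left₀ (abs_nonneg _) (hΦM 0 x) 2
      · exact hξ (.inr ⟨⟨k, mem_range.mp hk⟩, j (k + 1), j k⟩) fun x =>
          abs_sq_sub_sq_le_of_abs_sub_le (hΦM _ x) (hΦM _ x) (hj _ x) (hj _ x)

/-- Twice the assumed bound on `ε_{2^k}`: `entropyNum` is an infimum, so only covers at a
strictly larger scale are guaranteed to exist. -/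
noncomputable def chainScale (r b : ℝ) (k : ℕ) : ℝ :=
  2 * (((2 : ℝ) ^ k) ^ (-r) * logb 2 ((2 : ℝ) ^ k + 1) ^ b)

lemma logb_two_pow_add_one_le (k : ℕ) : logb 2 ((2 : ℝ) ^ k + 1) ≤ k + 1 := by
  rw [logb_le_iff_le_rpow one_lt_two (by positivity), rpow_add two_pos, rpow_natCast, rpow_one]
  linarith [one_le_pow₀ (M₀ := ℝ) one_le_two (n := k)]

lemma chainScale_le {r b : ℝ} (hb : 0 ≤ b) (k : ℕ) :
    chainScale r b k ≤ 2 * ((2 : ℝ) ^ k) ^ (-r) * (k + 1) ^ b := by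
  rw [chainScale, ← mul_assoc]
  gcongr
  · exact logb_nonneg one_lt_two (by linarith [one_le_pow₀ (M₀ := ℝ) one_le_two (n := k)])
  · exact logb_two_pow_add_one_le k

lemma sqrt_two_mul_chainExponent_div_le (k m : ℕ) :
    √(2 * chainExponent k / m) ≤ 4 * √((2 : ℝ) ^ k) / √m := by
  have h16 : 2 * chainExponent k ≤ 4 ^ 2 * 2 ^ k := by
    rw [chainExponent, pow_add]
    nlinarith [log_two_lt_d9, pow_pos (two_pos (α := ℝ)) k]
  calc √(2 * chainExponent k / m) ≤ √(4 ^ 2 * 2 ^ k / m) := by gcongr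
    _ = 4 * √((2 : ℝ) ^ k) / √m := by
      rw [sqrt_div' _ (Nat.cast_nonneg m), sqrt_mul' _ (by positivity), sqrt_sq zero_le_four]

lemma two_pow_rpow_neg_mul_sqrt (r : ℝ) (k : ℕ) :
    ((2 : ℝ) ^ k) ^ (-r) * √((2 : ℝ) ^ k) = ((2 : ℝ) ^ (1 / 2 - r)) ^ k := by
  rw [sqrt_eq_rpow, ← rpow_add (by positivity), rpow_pow_comm zero_le_two]
  ring_nf

section Estimates

variable {M r b : ℝ}

lemma link_chainScale_le (hM : 0 ≤ M) (hr : 0 < r) (hb : 0 ≤ b) (k m : ℕ) :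
    2 * M * (chainScale r b (k + 1) + chainScale r b k) * √(2 * chainExponent k / m)
      ≤ 32 * M * (k + 2) ^ b * ((2 : ℝ) ^ (1 / 2 - r)) ^ k / √m := by
  have hdecay : ((2 : ℝ) ^ (k + 1)) ^ (-r) ≤ ((2 : ℝ) ^ k) ^ (-r) :=
    rpow_le_rpow_of_nonpos (by positivity) (pow_le_pow_right₀ one_le_two k.le_succ) (by linarith)
  have hscale : chainScale r b (k + 1) + chainScale r b k
      ≤ 4 * ((2 : ℝ) ^ k) ^ (-r) * (k + 2) ^ b := by
    calc _ ≤ 2 * ((2 : ℝ) ^ (k + 1)) ^ (-r) * (((k + 1 : ℕ) : ℝ) + 1) ^ b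
          + 2 * ((2 : ℝ) ^ k) ^ (-r) * ((k : ℝ) + 1) ^ b :=
          add_le_add (chainScale_le hb _) (chainScale_le hb _)
      _ ≤ 2 * ((2 : ℝ) ^ k) ^ (-r) * ((k : ℝ) + 2) ^ b
          + 2 * ((2 : ℝ) ^ k) ^ (-r) * ((k : ℝ) + 2) ^ b := by
          gcongr 2 * ?_ * ?_ + _ * ?_
          · exact le_of_eq (by push_cast; ring_nf)
          · exact rpow_le_rpow (by positivity) (by linarith) hb
      _ = _ := by ring
  calc _ ≤ 2 * M * (4 * ((2 : ℝ) ^ k) ^ (-r) * (k + 2) ^ b) * (4 * √((2 : ℝ) ^ k) / √m) := by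
        gcongr
        exact sqrt_two_mul_chainExponent_div_le k m
    _ = 32 * M * (k + 2) ^ b * (((2 : ℝ) ^ k) ^ (-r) * √((2 : ℝ) ^ k)) / √m := by ring
    _ = _ := by rw [two_pow_rpow_neg_mul_sqrt]

lemma sum_link_chainScale_le (hM : 0 ≤ M) (hr0 : 0 < r) (hr : r < 1 / 2) (hb : 0 ≤ b) (K m : ℕ) :
    ∑ k ∈ range K, 2 * M * (chainScale r b (k + 1) + chainScale r b k) * √(2 * chainExponent k / m)
      ≤ 32 * M * (K + 1) ^ b
        * (((2 : ℝ) ^ (1 / 2 - r)) ^ K / ((2 : ℝ) ^ (1 / 2 - r) - 1)) / √m := by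
  set x : ℝ := (2 : ℝ) ^ (1 / 2 - r)
  have hx : 1 < x := one_lt_rpow one_lt_two (by linarith)
  have hgeom : ∑ k ∈ range K, x ^ k ≤ x ^ K / (x - 1) := by
    rw [geom_sum_eq hx.ne' K]
    gcongr
    linarith
  calc _ ≤ ∑ k ∈ range K, 32 * M * (K + 1) ^ b / √m * x ^ k := by
        refine sum_le_sum fun k hk => (link_chainScale_le hM hr0 hb k m).trans ?_
        have hkK : (k : ℝ) + 2 ≤ K + 1 := by
          exact_mod_cast Nat.succ_le_succ (mem_range.mp hk)
        rw [mul_div_right_comm]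
        gcongr
    _ = 32 * M * (K + 1) ^ b / √m * ∑ k ∈ range K, x ^ k := by rw [mul_sum]
    _ ≤ 32 * M * (K + 1) ^ b / √m * (x ^ K / (x - 1)) := by gcongr
    _ = _ := by ring

lemma natCast_le_two_pow_log_succ (m : ℕ) : (m : ℝ) ≤ 2 ^ (Nat.log 2 m + 1) := by
  exact_mod_cast (Nat.lt_pow_succ_log_self one_lt_two m).le

lemma two_pow_log_succ_le {m : ℕ} (hm : m ≠ 0) : (2 : ℝ) ^ (Nat.log 2 m + 1) ≤ 2 * m := by
  rw [pow_succ, mul_comm]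
  gcongr
  exact_mod_cast Nat.pow_log_le_self 2 hm

lemma one_le_logb_two_add_one {m : ℕ} (hm : m ≠ 0) : 1 ≤ logb 2 ((m : ℝ) + 1) := by
  rw [le_logb_iff_rpow_le one_lt_two (by positivity), rpow_one]
  have : (1 : ℝ) ≤ m := by exact_mod_cast Nat.one_le_iff_ne_zero.mpr hm
  linarith

lemma log_add_two_rpow_le {m : ℕ} (hm : m ≠ 0) (hb : 0 ≤ b) :
    ((Nat.log 2 m : ℝ) + 2) ^ b ≤ 3 ^ b * logb 2 ((m : ℝ) + 1) ^ b := by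
  have hlog : (Nat.log 2 m : ℝ) ≤ logb 2 ((m : ℝ) + 1) := by
    refine (natLog_le_logb m 2).trans ?_
    rw [Nat.cast_ofNat]
    exact logb_le_logb_of_le one_lt_two (by exact_mod_cast Nat.pos_of_ne_zero hm) (by linarith)
  have hone := one_le_logb_two_add_one hm
  rw [← mul_rpow zero_le_three (by linarith)]
  gcongr
  linarith

lemma one_div_sqrt_le_rpow_neg {m : ℝ} (hm : 1 ≤ m) (hr : r ≤ 1 / 2) : 1 / √m ≤ m ^ (-r) := by
  rw [sqrt_eq_rpow, one_div, ← rpow_neg (by linarith)]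
  exact rpow_le_rpow_of_exponent_le hm (by linarith)

lemma rpow_sub_half_div_sqrt {m : ℝ} (hm : 0 < m) : m ^ (1 / 2 - r) / √m = m ^ (-r) := by
  rw [sqrt_eq_rpow, ← rpow_sub hm]
  ring_nf

lemma rpow_pow_log_succ_le {γ : ℝ} (hγ : 0 ≤ γ) {m : ℕ} (hm : m ≠ 0) :
    ((2 : ℝ) ^ γ) ^ (Nat.log 2 m + 1) ≤ 2 ^ γ * (m : ℝ) ^ γ := by
  rw [rpow_pow_comm zero_le_two, ← mul_rpow zero_le_two (Nat.cast_nonneg m)]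
  gcongr
  exact two_pow_log_succ_le hm

lemma tail_chainScale_le (hM : 0 ≤ M) (hr : 0 < r) (hb : 0 ≤ b) {m : ℕ} (hm : 0 < m) :
    4 * M * chainScale r b (Nat.log 2 m + 1)
      ≤ 8 * M * ((Nat.log 2 m + 1 : ℕ) + 1) ^ b * (m : ℝ) ^ (-r) := by
  calc _ ≤ 4 * M
        * (2 * ((2 : ℝ) ^ (Nat.log 2 m + 1)) ^ (-r) * ((Nat.log 2 m + 1 : ℕ) + 1) ^ b) := by
        gcongr
        exact chainScale_le hb _
    _ ≤ 4 * M * (2 * (m : ℝ) ^ (-r) * ((Nat.log 2 m + 1 : ℕ) + 1) ^ b) := by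
        gcongr 4 * M * (2 * ?_ * _)
        exact rpow_le_rpow_of_nonpos (by exact_mod_cast hm) (natCast_le_two_pow_log_succ m)
          (neg_nonpos.mpr hr.le)
    _ = _ := by ring

lemma chainingBound_chainScale_le (hM : 0 < M) (hr0 : 0 < r) (hr : r < 1 / 2) (hb : 0 ≤ b) :
    ∃ C, 0 < C ∧ ∀ m : ℕ, 0 < m →
      chainingBound M (chainScale r b) (Nat.log 2 m + 1) m
        ≤ C * (m : ℝ) ^ (-r) * logb 2 ((m : ℝ) + 1) ^ b := by
  set x : ℝ := (2 : ℝ) ^ (1 / 2 - r)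
  have hx : 1 < x := one_lt_rpow one_lt_two (by linarith)
  have hx1 : 0 < x - 1 := by linarith
  refine ⟨4 * M ^ 2 + (32 * M * (x / (x - 1)) + 8 * M) * 3 ^ b, by positivity, fun m hm => ?_⟩
  set K := Nat.log 2 m + 1
  set L := logb 2 ((m : ℝ) + 1)
  have hm0 : (0 : ℝ) < m := by exact_mod_cast hm
  have hL : 1 ≤ L ^ b := one_le_rpow (one_le_logb_two_add_one hm.ne') hb
  have hKL : ((K : ℕ) + 1 : ℝ) ^ b ≤ 3 ^ b * L ^ b := by
    simpa [K, add_assoc, one_add_one_eq_two] using log_add_two_rpow_le hm.ne' hb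
  have hlevel0 : M ^ 2 * √(2 * chainExponent 0 / m) ≤ 4 * M ^ 2 * (m : ℝ) ^ (-r) := by
    calc _ ≤ M ^ 2 * (4 * √((2 : ℝ) ^ 0) / √m) := by
          gcongr
          exact sqrt_two_mul_chainExponent_div_le 0 m
      _ = 4 * M ^ 2 * (1 / √m) := by simp; ring
      _ ≤ _ := by
          gcongr
          exact one_div_sqrt_le_rpow_neg (by exact_mod_cast hm) hr.le
  calc chainingBound M (chainScale r b) K m
      ≤ 4 * M ^ 2 * (m : ℝ) ^ (-r) + 32 * M * (K + 1) ^ b * (x ^ K / (x - 1)) / √m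
        + 8 * M * (K + 1) ^ b * (m : ℝ) ^ (-r) :=
      add_le_add (add_le_add hlevel0 (sum_link_chainScale_le hM.le hr0 hr hb K m))
        (tail_chainScale_le hM.le hr0 hb hm)
    _ ≤ 4 * M ^ 2 * (m : ℝ) ^ (-r)
        + 32 * M * (K + 1) ^ b * (x * (m : ℝ) ^ (1 / 2 - r) / (x - 1)) / √m
        + 8 * M * (K + 1) ^ b * (m : ℝ) ^ (-r) := by
      gcongr
      exact rpow_pow_log_succ_le (by linarith) hm.ne'
    _ = (m : ℝ) ^ (-r) * (4 * M ^ 2 * 1 + (32 * M * (x / (x - 1)) + 8 * M) * (K + 1) ^ b) := by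
      rw [← rpow_sub_half_div_sqrt hm0]
      ring
    _ ≤ (m : ℝ) ^ (-r)
        * (4 * M ^ 2 * L ^ b + (32 * M * (x / (x - 1)) + 8 * M) * (3 ^ b * L ^ b)) := by
      gcongr
    _ = _ := by ring

end Estimates

section Covers

variable {Ω : Type*} {W : Set (Ω → ℝ)} {n : ℕ}

lemma UnifCovers.mono {ε ε' : ℝ} (h : UnifCovers W n ε) (hε : ε ≤ ε') : UnifCovers W n ε' := by
  obtain ⟨g, hgW, hcov⟩ := h
  exact ⟨g, hgW, fun f hf => (hcov f hf).imp fun j hj x => (hj x).trans hε⟩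

lemma unifCovers_two_mul (hW : W.Nonempty) {M : ℝ} (hWM : ∀ f ∈ W, ∀ x, |f x| ≤ M) :
    UnifCovers W n (2 * M) := by
  obtain ⟨f₀, hf₀⟩ := hW
  refine ⟨fun _ => f₀, fun _ => hf₀, fun f hf => ⟨⟨0, by positivity⟩, fun x => ?_⟩⟩
  linarith [abs_sub (f x) (f₀ x), hWM f hf x, hWM f₀ hf₀ x]

lemma unifCovers_of_entropyNum_lt (hne : ∃ ε₀, 0 < ε₀ ∧ UnifCovers W n ε₀) {ε : ℝ}
    (h : entropyNum W n < ε) : UnifCovers W n ε := by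
  obtain ⟨ε', ⟨-, hε'⟩, hlt⟩ := exists_lt_of_csInf_lt hne h
  exact hε'.mono hlt.le

end Covers

lemma unifCovers_chainScale {Ω : Type*} {W : Set (Ω → ℝ)} (hW : W.Nonempty) {M : ℝ}
    (hM : 0 < M) (hWM : ∀ f ∈ W, ∀ x, |f x| ≤ M) {r b : ℝ}
    (hent : ∀ n : ℕ, 0 < n → entropyNum W n ≤ (n : ℝ) ^ (-r) * logb 2 ((n : ℝ) + 1) ^ b)
    (k : ℕ) : UnifCovers W (2 ^ k) (chainScale r b k) := by
  refine unifCovers_of_entropyNum_lt ⟨2 * M, by positivity, unifCovers_two_mul hW hWM⟩ ?_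
  have hpos : 0 < logb 2 ((2 : ℝ) ^ k + 1) :=
    logb_pos one_lt_two (by linarith [one_le_pow₀ (M₀ := ℝ) one_le_two (n := k)])
  refine (hent (2 ^ k) (by positivity)).trans_lt ?_
  rw [chainScale]
  push_cast
  linarith [mul_pos (rpow_pos_of_pos (pow_pos two_pos k) (-r)) (rpow_pos_of_pos hpos b)]

lemma erL2_le {Ω : Type*} [MeasurableSpace Ω] {μ : Measure Ω} {W : Set (Ω → ℝ)} {m : ℕ}
    {B : ℝ} (hB : 0 ≤ B) (ξ : Fin m → Ω)
    (hξ : ∀ f ∈ W, |discrepancy μ ξ (fun x => f x ^ 2)| ≤ B) : erL2 μ W m ≤ B := by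
  refine ciInf_le_of_le ⟨0, ?_⟩ ξ (Real.iSup_le (fun f => hξ f f.2) hB)
  rintro _ ⟨ξ', rfl⟩
  exact Real.iSup_nonneg fun _ => abs_nonneg _

theorem sampling_discretization_from_entropy_general
    {d : ℕ} (Ω : Set (EuclideanSpace ℝ (Fin d)))
    (μ : Measure Ω) [IsProbabilityMeasure μ]
    (W : Set (Ω → ℝ)) (hWcont : ∀ f ∈ W, Continuous f)
    (M : ℝ) (hM : 0 < M) (hWM : ∀ f ∈ W, ∀ x, |f x| ≤ M)
    (r b : ℝ) (hr0 : 0 < r) (hr : r < 1 / 2) (hb : 0 ≤ b)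
    (hent : ∀ n : ℕ, 0 < n →
      entropyNum W n ≤ (n : ℝ) ^ (-r) * (Real.logb 2 ((n : ℝ) + 1)) ^ b) :
    ∃ C : ℝ, 0 < C ∧ ∀ m : ℕ, 0 < m →
      erL2 μ W m ≤ C * (m : ℝ) ^ (-r) * (Real.logb 2 ((m : ℝ) + 1)) ^ b := by
  obtain ⟨C, hC, hbound⟩ := chainingBound_chainScale_le hM hr0 hr hb
  refine ⟨C, hC, fun m hm => ?_⟩
  have hRHS : 0 ≤ C * (m : ℝ) ^ (-r) * logb 2 ((m : ℝ) + 1) ^ b := by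
    have := one_le_logb_two_add_one hm.ne'
    positivity
  rcases W.eq_empty_or_nonempty with rfl | hW
  · obtain ⟨x₀⟩ : Nonempty Ω := nonempty_of_isProbabilityMeasure μ
    exact erL2_le hRHS (fun _ => x₀) (by simp)
  obtain ⟨ξ, hξ⟩ := exists_sample_abs_discrepancy_sq_le_chainingBound μ
    (fun f hf => (hWcont f hf).measurable) hWM (unifCovers_chainScale hW hM hWM hent) hm
    (Nat.log 2 m + 1)
  exact erL2_le hRHS ξ fun f hf => (hξ f hf).trans (hbound m hm)

theorem sampling_discretization_from_entropy
    {d : ℕ} (Ω : Set (EuclideanSpace ℝ (Fin d))) (hΩ : IsCompact Ω)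
    (μ : Measure Ω) [IsProbabilityMeasure μ]
    (W : Set (Ω → ℝ)) (hWcont : ∀ f ∈ W, Continuous f)
    (M : ℝ) (hM : 0 < M) (hWM : ∀ f ∈ W, ∀ x, |f x| ≤ M)
    (r b : ℝ) (hr0 : 0 < r) (hr : r < 1 / 2) (hb : 0 ≤ b)
    (hent : ∀ n : ℕ, 0 < n →
      entropyNum W n ≤ (n : ℝ) ^ (-r) * (Real.logb 2 ((n : ℝ) + 1)) ^ b) :
    ∃ C : ℝ, 0 < C ∧ ∀ m : ℕ, 0 < m →
      erL2 μ W m ≤ C * (m : ℝ) ^ (-r) * (Real.logb 2 ((m : ℝ) + 1)) ^ b :=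
  sampling_discretization_from_entropy_general Ω μ W hWcont M hM hWM r b hr0 hr hb hent
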